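/- Every Poisson vector bundle over 𝔤* (the dual of a finite-dimensional Lie algebra with its Lie–Poisson structure) is deformation equivalent (homotopic through Poisson vector bundles) to the Poisson vector bundle 𝔤* × V associated with the representation V of 𝔤 = N₀* on the fiber over the origin. -/

import Mathlib

/-!
STATEMENT 9 (Theorem 4.1).  Every Poisson vector bundle over `𝔤*` is deformation
equivalent (homotopic through Poisson vector bundles) to the Poisson vector bundle
`𝔤* × V` associated with the representation `V` of `𝔤 = N₀*` on the fiber over the
origin.

Model: `𝔤` is presented in a basis as `Fin d → ℝ` with Lie bracket `ℓ`, `𝔤*` as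
`Fin d → ℝ` with the Lie–Poisson structure.  Since every vector bundle over `𝔤*` is
trivializable, a Poisson vector bundle structure on a rank-`n` complex bundle is encoded
by a `gl(n,ℂ)`-valued vector field `Z` on `𝔤*` satisfying the Maurer–Cartan equation;
the induced representation of `𝔤` on the fiber over the origin is `α ↦ Z 0 α`, and the
associated Poisson vector bundle corresponds to the constant field `x ↦ Z 0`.
Deformation equivalence means: connected by a family of Maurer–Cartan fields, smooth in
the deformation parameter.
-/

noncomputable def mmul (n : ℕ) (A B : Fin n → Fin n → ℂ) : Fin n → Fin n → ℂ :=
  fun i j => ∑ k, A i k * B k j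

noncomputable def hamVec (d : ℕ)
    (ℓ : (Fin d → ℝ) →ₗ[ℝ] (Fin d → ℝ) →ₗ[ℝ] (Fin d → ℝ))
    (α x : Fin d → ℝ) : Fin d → ℝ :=
  fun j => ∑ i, x i * (ℓ α (Pi.single j 1)) i

noncomputable def MaurerCartan (d n : ℕ)
    (ℓ : (Fin d → ℝ) →ₗ[ℝ] (Fin d → ℝ) →ₗ[ℝ] (Fin d → ℝ))
    (Z : (Fin d → ℝ) → (Fin d → ℝ) → (Fin n → Fin n → ℂ)) : Prop :=
  ∀ (x α β : Fin d → ℝ),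
    fderiv ℝ (fun y => Z y β) x (hamVec d ℓ α x) -
      fderiv ℝ (fun y => Z y α) x (hamVec d ℓ β x) -
      Z x (ℓ α β) + (mmul n (Z x α) (Z x β) - mmul n (Z x β) (Z x α)) = 0


section Aux

lemma hamVec_zero' (d : ℕ) (ℓ : (Fin d → ℝ) →ₗ[ℝ] (Fin d → ℝ) →ₗ[ℝ] (Fin d → ℝ))
    (α : Fin d → ℝ) : hamVec d ℓ α 0 = 0 := by
  funext j; simp [hamVec]

lemma hamVec_smul' (d : ℕ) (ℓ : (Fin d → ℝ) →ₗ[ℝ] (Fin d → ℝ) →ₗ[ℝ] (Fin d → ℝ))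
    (α : Fin d → ℝ) (t : ℝ) (x : Fin d → ℝ) :
    hamVec d ℓ α (t • x) = t • hamVec d ℓ α x := by
  funext j; simp [hamVec, Finset.mul_sum, mul_assoc]

lemma fderiv_smul_comp' {d : ℕ} {E : Type*} [NormedAddCommGroup E] [NormedSpace ℝ E]
    (f : (Fin d → ℝ) → E) (hf : ContDiff ℝ (⊤ : ℕ∞) f) (t : ℝ) (x v : Fin d → ℝ) :
    fderiv ℝ (fun y => f (t • y)) x v = fderiv ℝ f (t • x) (t • v) := by
  have key : fderiv ℝ (f ∘ fun y : Fin d → ℝ => t • y) x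
      = (fderiv ℝ f (t • x)).comp (t • ContinuousLinearMap.id ℝ (Fin d → ℝ)) := by
    rw [fderiv_comp x (hf.differentiable (by simp) (t • x))
      ((t • ContinuousLinearMap.id ℝ (Fin d → ℝ)).differentiableAt)]
    congr 1
    exact (t • ContinuousLinearMap.id ℝ (Fin d → ℝ)).fderiv
  have := congrFun (congrArg (fun (L : (Fin d → ℝ) →L[ℝ] E) => (L : (Fin d → ℝ) → E)) key) v
  simpa [Function.comp_def] using this

end Aux

theorem poisson_vector_bundle_over_lie_dual_homotopic_to_representation (d n : ℕ)
    (ℓ : (Fin d → ℝ) →ₗ[ℝ] (Fin d → ℝ) →ₗ[ℝ] (Fin d → ℝ))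
    (hskew : ∀ x y, ℓ x y = - ℓ y x)
    (hjacobi : ∀ x y z, ℓ x (ℓ y z) = ℓ (ℓ x y) z + ℓ y (ℓ x z))
    -- a Poisson vector bundle over `𝔤*`, encoded by a Maurer–Cartan field `Z`
    (Z : (Fin d → ℝ) → (Fin d → ℝ) → (Fin n → Fin n → ℂ))
    (hlin : ∀ x, IsLinearMap ℝ (Z x))
    (hsmooth : ∀ α, ContDiff ℝ (⊤ : ℕ∞) (fun y => Z y α))
    (hMC : MaurerCartan d n ℓ Z) :
    -- the fiber over the origin carries a representation of `𝔤`, namely `α ↦ Z 0 α`, …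
    (∀ α β, Z 0 (ℓ α β) = mmul n (Z 0 α) (Z 0 β) - mmul n (Z 0 β) (Z 0 α)) ∧
    -- … and `Z` is deformation equivalent to the associated constant (trivial) Poisson
    -- vector bundle `𝔤* × V`
    (∃ W : ℝ → (Fin d → ℝ) → (Fin d → ℝ) → (Fin n → Fin n → ℂ),
      W 1 = Z ∧
      W 0 = (fun _ => Z 0) ∧
      (∀ t : ℝ, t ∈ Set.Icc (0 : ℝ) 1 →
        MaurerCartan d n ℓ (W t) ∧ (∀ x, IsLinearMap ℝ (W t x)) ∧
          (∀ α, ContDiff ℝ (⊤ : ℕ∞) (fun y => W t y α))) ∧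
      (∀ α, ContDiff ℝ (⊤ : ℕ∞) (fun p : ℝ × (Fin d → ℝ) => W p.1 p.2 α))) := by

  -- the representation on the fiber over the origin
  have hrep : ∀ α β, Z 0 (ℓ α β) = mmul n (Z 0 α) (Z 0 β) - mmul n (Z 0 β) (Z 0 α) := by
    intro α β
    have h := hMC 0 α β
    rw [hamVec_zero', hamVec_zero'] at h
    simp only [map_zero, zero_sub, sub_zero, neg_sub] at h
    -- h : 0 - 0 - Z 0 (ℓ α β) + (mmul - mmul) = 0  (after simp)
    have h' : -(Z 0 (ℓ α β)) + (mmul n (Z 0 α) (Z 0 β) - mmul n (Z 0 β) (Z 0 α)) = 0 := by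
      have := hMC 0 α β
      rw [hamVec_zero', hamVec_zero'] at this
      simpa using this
    exact (neg_add_eq_zero.mp h')
  refine ⟨hrep, fun t x α => Z (t • x) α, ?_, ?_, ?_, ?_⟩
  · funext x; simp
  · funext x; simp
  · intro t _
    refine ⟨?_, fun x => ?_, fun α => ?_⟩
    · intro x α β
      have key : ∀ γ δ : Fin d → ℝ,
          fderiv ℝ (fun y => Z (t • y) δ) x (hamVec d ℓ γ x)
            = fderiv ℝ (fun y => Z y δ) (t • x) (hamVec d ℓ γ (t • x)) := by
        intro γ δ
        rw [fderiv_smul_comp' (fun y => Z y δ) (hsmooth δ) t x (hamVec d ℓ γ x),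
          hamVec_smul']
      rw [key α β, key β α]
      exact hMC (t • x) α β
    · exact hlin (t • x)
    · exact (hsmooth α).comp (contDiff_id.const_smul t)
  · intro α
    exact (hsmooth α).comp (contDiff_fst.smul contDiff_snd)
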